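/- arXiv:2204.03017 — 2 statements merged into one kernel-verified Lean document; each statement's English description precedes it below -/
import Mathlib

section
/- Let 𝓛 : ℝ^d → ℝ be differentiable, L-smooth, and satisfy the μ-PL condition with infimum value 𝓛*. Let w ∈ ℝ^d and let G be a square-integrable ℝ^d-valued random vector with E[G] = ∇𝓛(w) and E[‖G − ∇𝓛(w)‖²] ≤ (h/2)‖∇𝓛(w)‖² + σ², where h ≥ 0 and σ ≥ 0. Then for every step size η with 0 < η ≤ 1/(L(1 + h)), the stochastic gradient step W⁺ = w − ηG satisfies E[𝓛(W⁺)] − 𝓛* ≤ (1 − ημ)(𝓛(w) − 𝓛*) + η²Lσ²/2. -/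
/-!
Lipschitz continuity of `∇𝓛` traps `𝓛 y` between the quadratics
`𝓛 x + ⟪∇𝓛 x, y - x⟫ ± L/2 ‖y - x‖²`; the lower one makes `𝓛 (w - η G)` integrable and the
upper one, averaged, gives `E 𝓛(W⁺) ≤ 𝓛 w - η ‖∇𝓛 w‖² + L η² / 2 · E ‖G‖²`. Splitting
`E ‖G‖² = ‖∇𝓛 w‖² + E ‖G - ∇𝓛 w‖²` and using the variance bound and `L η (1 + h) ≤ 1`, the
last term is at most `η / 2 · ‖∇𝓛 w‖² + L η² σ² / 2`, and the PL inequality turns the remaining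
`-η / 2 · ‖∇𝓛 w‖²` into `-η μ (𝓛 w - 𝓛*)`.
-/

open MeasureTheory RealInnerProductSpace
open scoped NNReal

section

variable {F : Type*} [NormedAddCommGroup F] [InnerProductSpace ℝ F] [CompleteSpace F]
  {f : F → ℝ} {K : ℝ≥0} {Ω : Type*} {mΩ : MeasurableSpace Ω} {P : Measure Ω}

theorem integral_norm_sub_integral_sq [IsProbabilityMeasure P] {G : Ω → F} (hG : MemLp G 2 P) :
    ∫ ω, ‖G ω - ∫ ω', G ω' ∂P‖ ^ 2 ∂P = ∫ ω, ‖G ω‖ ^ 2 ∂P - ‖∫ ω, G ω ∂P‖ ^ 2 := by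
  set m := ∫ ω, G ω ∂P
  have hG1 : Integrable G P := hG.integrable one_le_two
  calc ∫ ω, ‖G ω - m‖ ^ 2 ∂P = ∫ ω, (‖G ω‖ ^ 2 - 2 * ⟪m, G ω⟫ + ‖m‖ ^ 2) ∂P := by
        congr with ω
        rw [norm_sub_sq_real, real_inner_comm]
    _ = ∫ ω, ‖G ω‖ ^ 2 ∂P - ‖m‖ ^ 2 := by
        have hinner := (hG1.const_inner m).const_mul (2 : ℝ)
        rw [integral_add (f := fun ω => ‖G ω‖ ^ 2 - 2 * ⟪m, G ω⟫)
          (hG.norm.integrable_sq.sub hinner) (integrable_const _),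
          integral_sub hG.norm.integrable_sq hinner, integral_const_mul, integral_inner hG1,
          real_inner_self_eq_norm_sq, integral_const, probReal_univ, one_smul]
        ring

theorem hasDerivAt_apply_add_smul (hf : Differentiable ℝ f) (x v : F) (t : ℝ) :
    HasDerivAt (fun s : ℝ => f (x + s • v)) ⟪gradient f (x + t • v), v⟫ t := by
  have hline : HasDerivAt (fun s : ℝ => x + s • v) v t := by
    simpa using ((hasDerivAt_id t).smul_const v).const_add x
  simpa [InnerProductSpace.toDual_apply_apply, Function.comp_def] using
    (hasGradientAt_iff_hasFDerivAt.mp (hf _).hasGradientAt).comp_hasDerivAt t hline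

theorem abs_sub_sub_inner_gradient_le (hf : Differentiable ℝ f)
    (hK : LipschitzWith K (gradient f)) (x y : F) :
    |f y - f x - ⟪gradient f x, y - x⟫| ≤ K / 2 * ‖y - x‖ ^ 2 := by
  set v := y - x
  let g : ℝ → ℝ := fun t => f (x + t • v) - f x - t * ⟪gradient f x, v⟫
  have hg : ∀ t, HasDerivAt g (⟪gradient f (x + t • v) - gradient f x, v⟫) t := fun t => by
    rw [inner_sub_left]
    exact ((hasDerivAt_apply_add_smul hf x v t).sub_const (f x)).sub
      ((hasDerivAt_id' t).mul_const ⟪gradient f x, v⟫ |>.congr_deriv (one_mul _))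
  have hg' : ∀ t ∈ Set.Ico (0 : ℝ) 1,
      ‖⟪gradient f (x + t • v) - gradient f x, v⟫‖ ≤ K * ‖v‖ ^ 2 * t := fun t ht => by
    calc ‖⟪gradient f (x + t • v) - gradient f x, v⟫‖
        ≤ ‖gradient f (x + t • v) - gradient f x‖ * ‖v‖ := norm_inner_le_norm _ _
      _ ≤ K * ‖(x + t • v) - x‖ * ‖v‖ := by gcongr; exact hK.norm_sub_le _ _
      _ = K * ‖v‖ ^ 2 * t := by
        rw [add_sub_cancel_left, norm_smul, Real.norm_of_nonneg ht.1]; ring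
  have hB : ∀ t, HasDerivAt (fun t : ℝ => K / 2 * ‖v‖ ^ 2 * t ^ 2) (K * ‖v‖ ^ 2 * t) t :=
    fun t => ((hasDerivAt_pow 2 t).const_mul (K / 2 * ‖v‖ ^ 2)).congr_deriv (by norm_num; ring)
  have := image_norm_le_of_norm_deriv_right_le_deriv_boundary (f := g)
    (fun t _ => (hg t).continuousAt.continuousWithinAt) (fun t _ => (hg t).hasDerivWithinAt)
    (by simp [g]) hB hg' (Set.right_mem_Icc.2 zero_le_one)
  simpa [g, v] using this

theorem integrable_comp_of_lipschitzWith_gradient [IsFiniteMeasure P] (hf : Differentiable ℝ f)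
    (hK : LipschitzWith K (gradient f)) {X : Ω → F} (hX : MemLp X 2 P) :
    Integrable (fun ω => f (X ω)) P := by
  have hbound : Integrable (fun ω => |f 0| + ‖gradient f 0‖ * ‖X ω‖ + K / 2 * ‖X ω‖ ^ 2) P :=
    ((integrable_const _).add ((hX.integrable one_le_two).norm.const_mul _)).add
      (hX.norm.integrable_sq.const_mul _)
  refine hbound.mono' (hf.continuous.comp_aestronglyMeasurable hX.1) (ae_of_all _ fun ω => ?_)
  have hquad := abs_le.mp (abs_sub_sub_inner_gradient_le hf hK 0 (X ω))
  have hlin := abs_le.mp (abs_real_inner_le_norm (gradient f 0) (X ω))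
  rw [sub_zero] at hquad
  rw [Real.norm_eq_abs, abs_le]
  constructor <;> linarith [le_abs_self (f 0), neg_abs_le (f 0)]

theorem integral_comp_sub_smul_le [IsProbabilityMeasure P] (hf : Differentiable ℝ f)
    (hK : LipschitzWith K (gradient f)) {G : Ω → F} (hG : MemLp G 2 P) (w : F) (η : ℝ) :
    ∫ ω, f (w - η • G ω) ∂P ≤
      f w - η * ⟪gradient f w, ∫ ω, G ω ∂P⟫ + K / 2 * η ^ 2 * ∫ ω, ‖G ω‖ ^ 2 ∂P := by
  have hG1 := hG.integrable one_le_two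
  have hinner := (hG1.const_inner (gradient f w)).const_mul η
  have hsq := hG.norm.integrable_sq.const_mul (K / 2 * η ^ 2)
  calc ∫ ω, f (w - η • G ω) ∂P
      ≤ ∫ ω, (f w - η * ⟪gradient f w, G ω⟫ + K / 2 * η ^ 2 * ‖G ω‖ ^ 2) ∂P := by
        refine integral_mono
          (integrable_comp_of_lipschitzWith_gradient hf hK ((memLp_const w).sub (hG.const_smul η)))
          (((integrable_const _).sub hinner).add hsq) fun ω => ?_
        have := (abs_le.mp (abs_sub_sub_inner_gradient_le hf hK w (w - η • G ω))).2
        rw [sub_sub_cancel_left, inner_neg_right, real_inner_smul_right, norm_neg, norm_smul,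
          mul_pow, Real.norm_eq_abs, sq_abs] at this
        linarith
    _ = f w - η * ⟪gradient f w, ∫ ω, G ω ∂P⟫ + K / 2 * η ^ 2 * ∫ ω, ‖G ω‖ ^ 2 ∂P := by
        rw [integral_add (f := fun ω => f w - η * ⟪gradient f w, G ω⟫)
          ((integrable_const _).sub hinner) hsq, integral_sub (integrable_const _) hinner,
          integral_const, integral_const_mul, integral_const_mul, integral_inner hG1,
          probReal_univ, one_smul]

end

theorem one_step_sgd_PL_contraction_general
    {d : ℕ} (𝓛 : EuclideanSpace ℝ (Fin d) → ℝ) (L μ Lstar h σ η : ℝ)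
    (hdiff : Differentiable ℝ 𝓛) (hL : 0 < L)
    (hsmooth : LipschitzWith (Real.toNNReal L) (gradient 𝓛))
    (hPL : ∀ v, 2 * μ * (𝓛 v - Lstar) ≤ ‖gradient 𝓛 v‖ ^ 2)
    (w : EuclideanSpace ℝ (Fin d))
    {Ω : Type*} {mΩ : MeasurableSpace Ω} (P : Measure Ω) [IsProbabilityMeasure P]
    (G : Ω → EuclideanSpace ℝ (Fin d)) (hG2 : MemLp G 2 P)
    (hmean : ∫ ω, G ω ∂P = gradient 𝓛 w)
    (hh : 0 ≤ h)
    (hvar : ∫ ω, ‖G ω - gradient 𝓛 w‖ ^ 2 ∂P ≤ h / 2 * ‖gradient 𝓛 w‖ ^ 2 + σ ^ 2)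
    (hη0 : 0 < η) (hη : η ≤ 1 / (L * (1 + h))) :
    (∫ ω, 𝓛 (w - η • G ω) ∂P) - Lstar ≤
      (1 - η * μ) * (𝓛 w - Lstar) + η ^ 2 * L * σ ^ 2 / 2 := by
  have hdescent := integral_comp_sub_smul_le hdiff hsmooth hG2 w η
  rw [Real.coe_toNNReal L hL.le, hmean, real_inner_self_eq_norm_sq] at hdescent
  rw [← hmean, integral_norm_sub_integral_sq hG2, hmean] at hvar
  have hstep : L * η * (1 + h / 2) ≤ 1 := by
    rw [le_div_iff₀ (by positivity)] at hη
    nlinarith [mul_nonneg (mul_nonneg hL.le hη0.le) hh]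
  have hnoise : L / 2 * η ^ 2 * ∫ ω, ‖G ω‖ ^ 2 ∂P ≤
      η / 2 * ‖gradient 𝓛 w‖ ^ 2 + η ^ 2 * L * σ ^ 2 / 2 := by
    linarith [mul_le_mul_of_nonneg_left hvar (by positivity : 0 ≤ L / 2 * η ^ 2),
      mul_le_mul_of_nonneg_left hstep (by positivity : 0 ≤ η / 2 * ‖gradient 𝓛 w‖ ^ 2)]
  linarith [mul_le_mul_of_nonneg_left (hPL w) hη0.le]

/-- One-step excess-risk contraction for a stochastic gradient step under the
weak growth condition and the μ-PL condition. -/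
theorem one_step_sgd_PL_contraction
    {d : ℕ} (𝓛 : EuclideanSpace ℝ (Fin d) → ℝ) (L μ Lstar h σ η : ℝ)
    (hdiff : Differentiable ℝ 𝓛) (hL : 0 < L)
    (hsmooth : LipschitzWith (Real.toNNReal L) (gradient 𝓛))
    (hμ : 0 < μ)
    (hattained : ∃ wstar, 𝓛 wstar = Lstar ∧ ∀ v, Lstar ≤ 𝓛 v)
    (hPL : ∀ v, 2 * μ * (𝓛 v - Lstar) ≤ ‖gradient 𝓛 v‖ ^ 2)
    (w : EuclideanSpace ℝ (Fin d))
    {Ω : Type*} {mΩ : MeasurableSpace Ω} (P : Measure Ω) [IsProbabilityMeasure P]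
    (G : Ω → EuclideanSpace ℝ (Fin d)) (hG2 : MemLp G 2 P)
    (hmean : ∫ ω, G ω ∂P = gradient 𝓛 w)
    (hh : 0 ≤ h) (hσ : 0 ≤ σ)
    (hvar : ∫ ω, ‖G ω - gradient 𝓛 w‖ ^ 2 ∂P ≤ h / 2 * ‖gradient 𝓛 w‖ ^ 2 + σ ^ 2)
    (hη0 : 0 < η) (hη : η ≤ 1 / (L * (1 + h))) :
    (∫ ω, 𝓛 (w - η • G ω) ∂P) - Lstar ≤
      (1 - η * μ) * (𝓛 w - Lstar) + η ^ 2 * L * σ ^ 2 / 2 :=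
  one_step_sgd_PL_contraction_general 𝓛 L μ Lstar h σ η hdiff hL hsmooth hPL w (mΩ := mΩ) P G hG2
    hmean hh hvar hη0 hη
end

section
/- (One-pass inefficiency of random sampling.) Let 𝓛 : ℝ^d → ℝ be differentiable, L-smooth, and satisfy the μ-PL condition with infimum value 𝓛*. Let (W_t, G_t)_{t∈ℕ} be a stochastic-gradient process for 𝓛 with step size η = 1/(L(1 + h)), growth constant h ≥ 0 and noise level σ ≥ 0, with deterministic initial point W_0 = w_0 and ημ ≤ 1. If the number of iterations is T = ⌈(1 + h)L/μ⌉, then E[𝓛(W_T)] − 𝓛* ≤ (𝓛(w_0) − 𝓛*)/e + σ²/(2μ(1 + h)). -/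
/-!
For one step `w ↦ w - η g`, smoothness gives `f (w - η g) ≤ f w - η ⟪∇f w, g⟫ + K η² ‖g‖² / 2`.
In expectation, unbiasedness turns the cross term into `E ‖∇f(W_t)‖²` and the variance bound gives
`E ‖G_t‖² ≤ (1 + h/2) E ‖∇f(W_t)‖² + σ²`; for `η = 1/(L(1+h))` the gradient terms leave at most
`-(η/2) E ‖∇f(W_t)‖²`, which the PL inequality bounds by `-ημ (E f(W_t) - f*)`. So the expected
excess risk contracts by `1 - ημ` per step up to an additive `Lη²σ²/2`; after `T ≥ 1/(ημ)` steps
`(1 - ημ)^T ≤ e⁻¹`, and the accumulated noise is at most `Lη²σ²/(2ημ) = σ²/(2μ(1+h))`.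
-/

open MeasureTheory RealInnerProductSpace
open scoped NNReal

section Smooth

variable {F : Type*} [NormedAddCommGroup F] [InnerProductSpace ℝ F] [CompleteSpace F]
  {f : F → ℝ} {K : ℝ≥0}

theorem le_add_inner_gradient_add_of_lipschitzWith_gradient (hf : Differentiable ℝ f)
    (hK : LipschitzWith K (gradient f)) (w v : F) :
    f v ≤ f w + ⟪gradient f w, v - w⟫ + K / 2 * ‖v - w‖ ^ 2 := by
  set u := v - w
  let φ : ℝ → ℝ := fun s => f (w + s • u) - s * ⟪gradient f w, u⟫ - K / 2 * s ^ 2 * ‖u‖ ^ 2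
  have hφ (s : ℝ) :
      HasDerivAt φ (⟪gradient f (w + s • u) - gradient f w, u⟫ - K * s * ‖u‖ ^ 2) s := by
    have hline : HasDerivAt (fun s : ℝ => w + s • u) u s := by
      simpa using ((hasDerivAt_id s).smul_const u).const_add w
    have hcomp := (hf _).hasGradientAt.hasFDerivAt.comp_hasDerivAt s hline
    have h := (hcomp.sub ((hasDerivAt_id s).mul_const ⟪gradient f w, u⟫)).sub
      (((hasDerivAt_pow 2 s).const_mul (K / 2 : ℝ)).mul_const (‖u‖ ^ 2))
    refine h.congr_deriv ?_
    simp only [InnerProductSpace.toDual_apply_apply, inner_sub_left]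
    ring
  have hanti : AntitoneOn φ (Set.Ici 0) := by
    refine antitoneOn_of_hasDerivWithinAt_nonpos (convex_Ici 0)
      (fun s _ => (hφ s).continuousAt.continuousWithinAt) (fun s _ => (hφ s).hasDerivWithinAt) ?_
    intro s hs
    rw [interior_Ici] at hs
    have hlip : ‖gradient f (w + s • u) - gradient f w‖ ≤ K * (s * ‖u‖) := by
      simpa [norm_smul, abs_of_pos (Set.mem_Ioi.mp hs)] using hK.norm_sub_le (w + s • u) w
    have := real_inner_le_norm (gradient f (w + s • u) - gradient f w) u
    nlinarith [norm_nonneg u]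
  have := hanti Set.self_mem_Ici (show (1:ℝ) ∈ Set.Ici 0 by norm_num) zero_le_one
  simp only [φ, zero_smul, add_zero, one_smul, u, add_sub_cancel] at this
  linarith

end Smooth

theorem LipschitzWith.comp_memLp_of_isFiniteMeasure {α E F : Type*} {K : ℝ≥0} {p : ENNReal}
    {mα : MeasurableSpace α} {μ : Measure α} [IsFiniteMeasure μ]
    [NormedAddCommGroup E] [NormedAddCommGroup F] {g : E → F} {X : α → E}
    (hg : LipschitzWith K g) (hX : MemLp X p μ) : MemLp (fun a => g (X a)) p μ := by
  have h0 : MemLp ((fun x => g x - g 0) ∘ X) p μ :=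
    (hg.sub (LipschitzWith.const (g 0))).comp_memLp (sub_self _) hX
  convert h0.add (memLp_const (g 0)) using 1
  ext a
  simp

namespace MeasureTheory

variable {Ω E : Type*} [NormedAddCommGroup E] [InnerProductSpace ℝ E]
  {m mΩ : MeasurableSpace Ω} {μ : Measure Ω}

theorem MemLp.integrable_inner {X Y : Ω → E} (hX : MemLp X 2 μ) (hY : MemLp Y 2 μ) :
    Integrable (fun ω => ⟪X ω, Y ω⟫) μ := by
  refine (L2.integrable_inner (𝕜 := ℝ) (hX.toLp X) (hY.toLp Y)).congr ?_
  filter_upwards [hX.coeFn_toLp, hY.coeFn_toLp] with ω hXω hYω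
  rw [hXω, hYω]

variable [CompleteSpace E]

section Finite

variable [IsFiniteMeasure μ]

theorem integrable_comp_of_lipschitzWith_gradient {f : E → ℝ} {K : ℝ≥0}
    (hf : Differentiable ℝ f) (hK : LipschitzWith K (gradient f)) {X : Ω → E}
    (hX : MemLp X 2 μ) : Integrable (fun ω => f (X ω)) μ := by
  have hgX : MemLp (fun ω => gradient f (X ω)) 2 μ := hK.comp_memLp_of_isFiniteMeasure hX
  have hXsq : Integrable (fun ω => ‖X ω‖ ^ 2) μ := hX.norm.integrable_sq
  refine integrable_of_le_of_le (hf.continuous.comp_aestronglyMeasurable hX.1)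
    (g₁ := fun ω => f 0 + ⟪gradient f (X ω), X ω⟫ - K / 2 * ‖X ω‖ ^ 2)
    (g₂ := fun ω => f 0 + ⟪gradient f 0, X ω⟫ + K / 2 * ‖X ω‖ ^ 2) (.of_forall fun ω => ?_)
    (.of_forall fun ω => ?_) (((integrable_const _).add (hgX.integrable_inner hX)).sub
      (hXsq.const_mul _)) (((integrable_const _).add ((hX.integrable one_le_two).const_inner _)).add
      (hXsq.const_mul _))
  · have := le_add_inner_gradient_add_of_lipschitzWith_gradient hf hK (X ω) 0
    simp only [zero_sub, inner_neg_right, norm_neg] at this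
    linarith
  · simpa using le_add_inner_gradient_add_of_lipschitzWith_gradient hf hK 0 (X ω)

theorem integral_inner_condExp (hm : m ≤ mΩ) {X G : Ω → E} (hX : MemLp X 2 μ)
    (hXm : AEStronglyMeasurable[m] X μ) (hG : MemLp G 2 μ) :
    ∫ ω, ⟪X ω, (μ[G|m]) ω⟫ ∂μ = ∫ ω, ⟪X ω, G ω⟫ ∂μ := by
  have hL2 := inner_condExpL2_eq_inner_fun (𝕜 := ℝ) hm (hG.toLp G) (hX.toLp X)
    (hXm.congr hX.coeFn_toLp.symm)
  rw [L2.inner_def, L2.inner_def] at hL2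
  calc ∫ ω, ⟪X ω, (μ[G|m]) ω⟫ ∂μ
      = ∫ ω, ⟪(condExpL2 E ℝ hm (hG.toLp G) : Ω →₂[μ] E) ω, (hX.toLp X) ω⟫ ∂μ := by
        refine integral_congr_ae ?_
        filter_upwards [hX.coeFn_toLp, hG.condExpL2_ae_eq_condExp (𝕜 := ℝ) hm] with ω hXω hGω
        rw [hXω, hGω, real_inner_comm]
    _ = ∫ ω, ⟪(hG.toLp G) ω, (hX.toLp X) ω⟫ ∂μ := hL2
    _ = ∫ ω, ⟪X ω, G ω⟫ ∂μ := by
        refine integral_congr_ae ?_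
        filter_upwards [hX.coeFn_toLp, hG.coeFn_toLp] with ω hXω hGω
        rw [hXω, hGω, real_inner_comm]

theorem integral_inner_eq_integral_norm_sq_of_condExp_eq (hm : m ≤ mΩ) {Y G : Ω → E}
    (hY : MemLp Y 2 μ) (hYm : AEStronglyMeasurable[m] Y μ) (hG : MemLp G 2 μ)
    (hmean : μ[G|m] =ᵐ[μ] Y) :
    ∫ ω, ⟪Y ω, G ω⟫ ∂μ = ∫ ω, ‖Y ω‖ ^ 2 ∂μ := by
  rw [← integral_inner_condExp hm hY hYm hG]
  refine integral_congr_ae ?_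
  filter_upwards [hmean] with ω hω
  rw [hω, real_inner_self_eq_norm_sq]

theorem integral_norm_sq_eq_of_condExp_eq (hm : m ≤ mΩ) {Y G : Ω → E}
    (hY : MemLp Y 2 μ) (hYm : AEStronglyMeasurable[m] Y μ) (hG : MemLp G 2 μ)
    (hmean : μ[G|m] =ᵐ[μ] Y) :
    ∫ ω, ‖G ω‖ ^ 2 ∂μ = ∫ ω, ‖G ω - Y ω‖ ^ 2 ∂μ + ∫ ω, ‖Y ω‖ ^ 2 ∂μ := by
  have hYG := integral_inner_eq_integral_norm_sq_of_condExp_eq hm hY hYm hG hmean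
  have hsq : Integrable (fun ω => ‖G ω - Y ω‖ ^ 2) μ := (hG.sub hY).norm.integrable_sq
  have hpoint : (fun ω => ‖G ω‖ ^ 2)
      = fun ω => ‖G ω - Y ω‖ ^ 2 + 2 * ⟪Y ω, G ω⟫ - ‖Y ω‖ ^ 2 := by
    ext ω
    rw [norm_sub_sq_real, real_inner_comm]
    ring
  have hYG' := (hY.integrable_inner hG).const_mul 2
  have hsum : Integrable (fun ω => ‖G ω - Y ω‖ ^ 2 + 2 * ⟪Y ω, G ω⟫) μ := hsq.add hYG'
  rw [hpoint, integral_sub hsum hY.norm.integrable_sq, integral_add hsq hYG',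
    integral_const_mul, hYG]
  ring

end Finite

variable [IsProbabilityMeasure μ] {f : E → ℝ} {K : ℝ≥0}

theorem integral_comp_sub_smul_le (hf : Differentiable ℝ f)
    (hK : LipschitzWith K (gradient f)) (hm : m ≤ mΩ) {X G : Ω → E} (hX : MemLp X 2 μ)
    (hXm : StronglyMeasurable[m] X) (hG : MemLp G 2 μ)
    (hmean : μ[G|m] =ᵐ[μ] fun ω => gradient f (X ω)) {h σ : ℝ}
    (hvar : ∀ᵐ ω ∂μ, μ[fun ω' => ‖G ω' - gradient f (X ω')‖ ^ 2 | m] ω ≤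
      h / 2 * ‖gradient f (X ω)‖ ^ 2 + σ ^ 2) (η : ℝ) :
    ∫ ω, f (X ω - η • G ω) ∂μ ≤ ∫ ω, f (X ω) ∂μ - η * ∫ ω, ‖gradient f (X ω)‖ ^ 2 ∂μ +
      K * η ^ 2 / 2 * ((1 + h / 2) * ∫ ω, ‖gradient f (X ω)‖ ^ 2 ∂μ + σ ^ 2) := by
  set Y := fun ω => gradient f (X ω)
  have hY : MemLp Y 2 μ := hK.comp_memLp_of_isFiniteMeasure hX
  have hYm : AEStronglyMeasurable[m] Y μ :=
    (hK.continuous.comp_stronglyMeasurable hXm).aestronglyMeasurable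
  have hYsq : Integrable (fun ω => ‖Y ω‖ ^ 2) μ := hY.norm.integrable_sq
  have hvar_int : ∫ ω, ‖G ω - Y ω‖ ^ 2 ∂μ ≤ h / 2 * ∫ ω, ‖Y ω‖ ^ 2 ∂μ + σ ^ 2 := by
    rw [← integral_condExp hm]
    refine (integral_mono_ae integrable_condExp ((hYsq.const_mul _).add (integrable_const _))
      hvar).trans_eq ?_
    rw [integral_add' (hYsq.const_mul _) (integrable_const _), integral_const_mul,
      integral_const, probReal_univ, one_smul]
  have hdescent (ω : Ω) : f (X ω - η • G ω) ≤
      f (X ω) - η * ⟪Y ω, G ω⟫ + K * η ^ 2 / 2 * ‖G ω‖ ^ 2 := by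
    have := le_add_inner_gradient_add_of_lipschitzWith_gradient hf hK (X ω) (X ω - η • G ω)
    rw [sub_sub_cancel_left, inner_neg_right, real_inner_smul_right, norm_neg, norm_smul,
      Real.norm_eq_abs, mul_pow, sq_abs] at this
    linarith
  have hfX := integrable_comp_of_lipschitzWith_gradient hf hK hX
  have hYG := (hY.integrable_inner hG).const_mul η
  have hGsq := (hG.norm.integrable_sq).const_mul (K * η ^ 2 / 2 : ℝ)
  have hfXYG : Integrable (fun ω => f (X ω) - η * ⟪Y ω, G ω⟫) μ := hfX.sub hYG
  calc ∫ ω, f (X ω - η • G ω) ∂μ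
      ≤ ∫ ω, (f (X ω) - η * ⟪Y ω, G ω⟫ + K * η ^ 2 / 2 * ‖G ω‖ ^ 2) ∂μ :=
        integral_mono (integrable_comp_of_lipschitzWith_gradient hf hK (hX.sub (hG.const_smul η)))
          (hfXYG.add hGsq) hdescent
    _ = ∫ ω, f (X ω) ∂μ - η * ∫ ω, ‖Y ω‖ ^ 2 ∂μ + K * η ^ 2 / 2 * ∫ ω, ‖G ω‖ ^ 2 ∂μ := by
        rw [integral_add hfXYG hGsq, integral_sub hfX hYG, integral_const_mul, integral_const_mul,
          integral_inner_eq_integral_norm_sq_of_condExp_eq hm hY hYm hG hmean]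
    _ ≤ _ := by
        rw [integral_norm_sq_eq_of_condExp_eq hm hY hYm hG hmean]
        have hKη : (0:ℝ) ≤ K * η ^ 2 / 2 := by positivity
        nlinarith [mul_le_mul_of_nonneg_left hvar_int hKη]

theorem integral_comp_sub_smul_sub_le_of_PL (hf : Differentiable ℝ f)
    (hK : LipschitzWith K (gradient f)) {μPL fstar : ℝ}
    (hPL : ∀ v, 2 * μPL * (f v - fstar) ≤ ‖gradient f v‖ ^ 2) (hm : m ≤ mΩ) {X G : Ω → E}
    (hX : MemLp X 2 μ) (hXm : StronglyMeasurable[m] X) (hG : MemLp G 2 μ)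
    (hmean : μ[G|m] =ᵐ[μ] fun ω => gradient f (X ω)) {h σ : ℝ}
    (hvar : ∀ᵐ ω ∂μ, μ[fun ω' => ‖G ω' - gradient f (X ω')‖ ^ 2 | m] ω ≤
      h / 2 * ‖gradient f (X ω)‖ ^ 2 + σ ^ 2) {η : ℝ} (hη : 0 ≤ η)
    (hηK : K * η * (1 + h / 2) ≤ 1) :
    ∫ ω, f (X ω - η • G ω) ∂μ - fstar ≤
      (1 - η * μPL) * (∫ ω, f (X ω) ∂μ - fstar) + K * η ^ 2 * σ ^ 2 / 2 := by
  have hstep := integral_comp_sub_smul_le hf hK hm hX hXm hG hmean hvar η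
  have hgrad : 0 ≤ ∫ ω, ‖gradient f (X ω)‖ ^ 2 ∂μ := integral_nonneg fun ω => by positivity
  have hPL_int : 2 * μPL * (∫ ω, f (X ω) ∂μ - fstar) ≤ ∫ ω, ‖gradient f (X ω)‖ ^ 2 ∂μ := by
    have hfX := integrable_comp_of_lipschitzWith_gradient hf hK hX
    calc 2 * μPL * (∫ ω, f (X ω) ∂μ - fstar) = ∫ ω, 2 * μPL * (f (X ω) - fstar) ∂μ := by
          rw [integral_const_mul, integral_sub hfX (integrable_const _), integral_const,
            probReal_univ, one_smul]
      _ ≤ ∫ ω, ‖gradient f (X ω)‖ ^ 2 ∂μ :=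
          integral_mono ((hfX.sub (integrable_const _)).const_mul _)
            (hK.comp_memLp_of_isFiniteMeasure hX).norm.integrable_sq fun ω => hPL (X ω)
  have hcoef : K * η ^ 2 / 2 * (1 + h / 2) ≤ η / 2 := by nlinarith
  nlinarith [mul_le_mul_of_nonneg_right hcoef hgrad]

end MeasureTheory

theorem le_pow_mul_add_div_of_le_mul_add {a : ℕ → ℝ} {q c : ℝ} (hq₀ : 0 ≤ q) (hq₁ : q < 1)
    (hc : 0 ≤ c) (ha : ∀ t, a (t + 1) ≤ q * a t + c) (T : ℕ) :
    a T ≤ q ^ T * a 0 + c / (1 - q) := by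
  have h1q : 0 < 1 - q := by linarith
  induction T with
  | zero => simpa using div_nonneg hc h1q.le
  | succ T ih =>
    calc a (T + 1) ≤ q * (q ^ T * a 0 + c / (1 - q)) + c := (ha T).trans (by gcongr)
      _ = q ^ (T + 1) * a 0 + c / (1 - q) := by field_simp; ring

theorem one_sub_pow_le_exp_neg_one {x : ℝ} {n : ℕ} (hx : x ≤ 1) (hn : 1 ≤ n * x) :
    (1 - x) ^ n ≤ Real.exp (-1) :=
  calc (1 - x) ^ n ≤ Real.exp (-x) ^ n :=
        pow_le_pow_left₀ (by linarith) (by linarith [Real.add_one_le_exp (-x)]) n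
    _ = Real.exp (-(n * x)) := by rw [← Real.exp_nat_mul]; ring_nf
    _ ≤ Real.exp (-1) := Real.exp_le_exp.mpr (by linarith)

theorem le_exp_neg_one_mul_add_div_of_le_one_sub_mul_add {a : ℕ → ℝ} {x c : ℝ} (hx₀ : 0 < x)
    (hx₁ : x ≤ 1) (hc : 0 ≤ c) (ha₀ : 0 ≤ a 0) (ha : ∀ t, a (t + 1) ≤ (1 - x) * a t + c)
    {T : ℕ} (hT : 1 ≤ T * x) : a T ≤ Real.exp (-1) * a 0 + c / x := by
  have hrec := le_pow_mul_add_div_of_le_mul_add (sub_nonneg.2 hx₁) (sub_lt_self 1 hx₀) hc ha T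
  rw [sub_sub_cancel] at hrec
  have hpow := one_sub_pow_le_exp_neg_one hx₁ hT
  nlinarith

theorem one_pass_inefficiency_random_sampling_general
    {d : ℕ} (𝓛 : EuclideanSpace ℝ (Fin d) → ℝ) (L μPL Lstar h σ η : ℝ)
    (hdiff : Differentiable ℝ 𝓛) (hL : 0 < L)
    (hsmooth : LipschitzWith (Real.toNNReal L) (gradient 𝓛))
    (hμ : 0 < μPL)
    (hattained : ∃ wstar, 𝓛 wstar = Lstar ∧ ∀ v, Lstar ≤ 𝓛 v)
    (hPL : ∀ v, 2 * μPL * (𝓛 v - Lstar) ≤ ‖gradient 𝓛 v‖ ^ 2)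
    {Ω : Type*} {mΩ : MeasurableSpace Ω} (P : Measure Ω) [IsProbabilityMeasure P]
    (ℱ : Filtration ℕ mΩ)
    (W G : ℕ → Ω → EuclideanSpace ℝ (Fin d))
    (hadapted : Adapted ℱ W)
    (hG2 : ∀ t, MemLp (G t) 2 P)
    (w0 : EuclideanSpace ℝ (Fin d)) (hW0 : ∀ ω, W 0 ω = w0)
    (hupdate : ∀ t, ∀ᵐ ω ∂P, W (t + 1) ω = W t ω - η • G t ω)
    (hmean : ∀ t, P[G t | ℱ t] =ᵐ[P] fun ω => gradient 𝓛 (W t ω))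
    (hh : 0 ≤ h)
    (hvar : ∀ t, ∀ᵐ ω ∂P,
      (P[(fun ω' => ‖G t ω' - gradient 𝓛 (W t ω')‖ ^ 2) | ℱ t]) ω ≤
        h / 2 * ‖gradient 𝓛 (W t ω)‖ ^ 2 + σ ^ 2)
    (hηdef : η = 1 / (L * (1 + h))) (hημ : η * μPL ≤ 1)
    (T : ℕ) (hT : T = ⌈(1 + h) * L / μPL⌉₊) :
    (∫ ω, 𝓛 (W T ω) ∂P) - Lstar ≤
      (𝓛 w0 - Lstar) / Real.exp 1 + σ ^ 2 / (2 * μPL * (1 + h)) := by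
  obtain ⟨-, -, hlow⟩ := hattained
  have hL_coe : (Real.toNNReal L : ℝ) = L := Real.coe_toNNReal L hL.le
  have hη : 0 < η := by rw [hηdef]; positivity
  have hW (t : ℕ) : MemLp (W t) 2 P := by
    induction t with
    | zero => exact (memLp_const w0).ae_eq (.of_forall fun ω => (hW0 ω).symm)
    | succ t ih =>
      exact (ih.sub ((hG2 t).const_smul η)).ae_eq ((hupdate t).mono fun _ hω => hω.symm)
  have hstep (t : ℕ) : (∫ ω, 𝓛 (W (t + 1) ω) ∂P) - Lstar ≤
      (1 - η * μPL) * ((∫ ω, 𝓛 (W t ω) ∂P) - Lstar) + L * η ^ 2 * σ ^ 2 / 2 := by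
    rw [integral_congr_ae ((hupdate t).mono fun ω hω => congrArg 𝓛 hω), ← hL_coe]
    refine integral_comp_sub_smul_sub_le_of_PL hdiff hsmooth hPL (ℱ.le t) (hW t)
      (hadapted t).stronglyMeasurable (hG2 t) (hmean t) (hvar t) hη.le ?_
    rw [hL_coe, hηdef]
    field_simp
    linarith
  have hT' : 1 ≤ T * (η * μPL) :=
    calc (1 : ℝ) = (1 + h) * L / μPL * (η * μPL) := by rw [hηdef]; field_simp
      _ ≤ T * (η * μPL) :=
        mul_le_mul_of_nonneg_right (hT ▸ Nat.le_ceil _) (mul_pos hη hμ).le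
  have hrec := le_exp_neg_one_mul_add_div_of_le_one_sub_mul_add
    (a := fun t => ∫ ω, 𝓛 (W t ω) ∂P - Lstar) (mul_pos hη hμ) hημ (by positivity)
    (by simpa [hW0] using hlow w0) hstep hT'
  calc _ ≤ Real.exp (-1) * (𝓛 w0 - Lstar) + L * η ^ 2 * σ ^ 2 / 2 / (η * μPL) := by
        simpa [hW0] using hrec
    _ = _ := by rw [Real.exp_neg, inv_mul_eq_div, hηdef]; field_simp

/-- One-pass inefficiency of random sampling: after `T = ⌈(1 + h) L / μPL⌉`
SGD steps with step size `η = 1 / (L (1 + h))`, the expected excess risk is only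
reduced by a factor `1/e` up to a noise floor of `σ² / (2 μPL (1 + h))`. -/
theorem one_pass_inefficiency_random_sampling
    {d : ℕ} (𝓛 : EuclideanSpace ℝ (Fin d) → ℝ) (L μPL Lstar h σ η : ℝ)
    (hdiff : Differentiable ℝ 𝓛) (hL : 0 < L)
    (hsmooth : LipschitzWith (Real.toNNReal L) (gradient 𝓛))
    (hμ : 0 < μPL)
    (hattained : ∃ wstar, 𝓛 wstar = Lstar ∧ ∀ v, Lstar ≤ 𝓛 v)
    (hPL : ∀ v, 2 * μPL * (𝓛 v - Lstar) ≤ ‖gradient 𝓛 v‖ ^ 2)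
    {Ω : Type*} {mΩ : MeasurableSpace Ω} (P : Measure Ω) [IsProbabilityMeasure P]
    (ℱ : Filtration ℕ mΩ)
    (W G : ℕ → Ω → EuclideanSpace ℝ (Fin d))
    (hadapted : Adapted ℱ W)
    (hGmeas : ∀ t, StronglyMeasurable[ℱ (t + 1)] (G t))
    (hG2 : ∀ t, MemLp (G t) 2 P)
    (w0 : EuclideanSpace ℝ (Fin d)) (hW0 : ∀ ω, W 0 ω = w0)
    (hupdate : ∀ t, ∀ᵐ ω ∂P, W (t + 1) ω = W t ω - η • G t ω)
    (hmean : ∀ t, P[G t | ℱ t] =ᵐ[P] fun ω => gradient 𝓛 (W t ω))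
    (hh : 0 ≤ h) (hσ : 0 ≤ σ)
    (hvar : ∀ t, ∀ᵐ ω ∂P,
      (P[(fun ω' => ‖G t ω' - gradient 𝓛 (W t ω')‖ ^ 2) | ℱ t]) ω ≤
        h / 2 * ‖gradient 𝓛 (W t ω)‖ ^ 2 + σ ^ 2)
    (hηdef : η = 1 / (L * (1 + h))) (hημ : η * μPL ≤ 1)
    (T : ℕ) (hT : T = ⌈(1 + h) * L / μPL⌉₊) :
    (∫ ω, 𝓛 (W T ω) ∂P) - Lstar ≤
      (𝓛 w0 - Lstar) / Real.exp 1 + σ ^ 2 / (2 * μPL * (1 + h)) :=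
  one_pass_inefficiency_random_sampling_general 𝓛 L μPL Lstar h σ η hdiff hL hsmooth hμ hattained
    hPL P ℱ W G hadapted hG2 w0 hW0 hupdate hmean hh hvar hηdef hημ T hT
end
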